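/- arXiv:2008.05364 — 2 statements merged into one kernel-verified Lean document; each statement's English description precedes it below -/
import Mathlib

section
/- Let N be an even positive integer and x ∈ Π[N] with x̂[0] = 0 and x̂[N/2] = 0. Then ‖H(x)‖ = ‖x‖. -/
open MeasureTheory

namespace WP

/-- The root of unity ω = e^{2πi/N}. -/
noncomputable def ww (N : ℕ) : ℂ := Complex.exp (2 * Real.pi * Complex.I / N)

/-- DFT of a signal `x ∈ Π[N]`: x̂[n] = Σ_{k=0}^{N−1} ω^{−kn} x[k]. -/
noncomputable def dft (N : ℕ) (x : ℤ → ℂ) (n : ℤ) : ℂ :=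
  ∑ k ∈ Finset.range N, ww N ^ (-((k : ℤ) * n)) * x k

/-- Inner product on `Π[N]`. -/
noncomputable def inner1 (N : ℕ) (x y : ℤ → ℂ) : ℂ :=
  ∑ k ∈ Finset.range N, x k * (starRingEnd ℂ) (y k)

/-- The discrete periodic Hilbert transform, defined via the DFT:
    Ĥ(x)[n] = −i·x̂[n] for 0<n<N/2, i·x̂[n] for N/2<n<N, 0 at n=0 and n=N/2. -/
noncomputable def hilbertT (N : ℕ) (x : ℤ → ℂ) (k : ℤ) : ℂ :=
  (N : ℂ)⁻¹ * ∑ n ∈ Finset.range N,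
    (if 0 < n ∧ n < N / 2 then -Complex.I else if N / 2 < n ∧ n < N then Complex.I else 0) *
      dft N x n * ww N ^ ((k * (n : ℤ)))

/-- The complementary-WP operator `C`, defined via the DFT:
    Ĉ(x)[n] = −i·x̂[n] for 0<n<N/2, i·x̂[n] for N/2<n<N, x̂[0] at 0, x̂[N/2] at N/2. -/
noncomputable def cwpT (N : ℕ) (x : ℤ → ℂ) (k : ℤ) : ℂ :=
  (N : ℂ)⁻¹ * ∑ n ∈ Finset.range N,
    (if n = 0 ∨ n = N / 2 then 1 else if n < N / 2 then -Complex.I else Complex.I) *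
      dft N x n * ww N ^ ((k * (n : ℤ)))

/-- The order-p B-spline b^p(t). -/
noncomputable def bspline (p : ℕ) (t : ℝ) : ℝ :=
  (1 / (Nat.factorial (p - 1) : ℝ)) *
    ∑ k ∈ Finset.range (p + 1),
      (-1 : ℝ) ^ k * (p.choose k : ℝ) * max (t + (p : ℝ) / 2 - (k : ℝ)) 0 ^ (p - 1)

/-- u^p[n] = Σ_{k=−N/2}^{N/2−1} ω^{−kn} b^p(k). -/
noncomputable def uSeq (N p : ℕ) (n : ℤ) : ℂ :=
  ∑ k ∈ Finset.range N,
    ww N ^ (-(((k : ℤ) - (N : ℤ) / 2) * n)) * (bspline p ((k : ℝ) - (N : ℝ) / 2) : ℂ)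

/-- v^p[n] = e^{−πin/N} Σ_{k=−N/2}^{N/2−1} ω^{−kn} b^p(k+1/2). -/
noncomputable def vSeq (N p : ℕ) (n : ℤ) : ℂ :=
  Complex.exp (-Real.pi * Complex.I * n / N) *
    ∑ k ∈ Finset.range N,
      ww N ^ (-(((k : ℤ) - (N : ℤ) / 2) * n)) *
        (bspline p ((k : ℝ) - (N : ℝ) / 2 + 1 / 2) : ℂ)

/-- The span-two discrete-time B-spline b_{[1]}^p ∈ Π[N]:
    the N-periodic signal with b_{[1]}^p[k] = b^p(k/2)/2 for −N/2 ≤ k ≤ N/2−1. -/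
noncomputable def bs1 (N p : ℕ) (k : ℤ) : ℂ :=
  ((bspline p ((((k + (N : ℤ) / 2) % (N : ℤ) - (N : ℤ) / 2 : ℤ) : ℝ) / 2) : ℝ) : ℂ) / 2

/-- Its DFT b̂_{[1]}^p[n] = Σ_{k=−N/2}^{N/2−1} ω^{−kn} b_{[1]}^p[k]. -/
noncomputable def bhat1 (N p : ℕ) (n : ℤ) : ℂ :=
  ∑ k ∈ Finset.range N,
    ww N ^ (-(((k : ℤ) - (N : ℤ) / 2) * n)) * bs1 N p ((k : ℤ) - (N : ℤ) / 2)

/-- Υ^p[n] = (u^p[2n]² + v^p[2n]²)/4. -/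
noncomputable def upsilon (N p : ℕ) (n : ℤ) : ℂ :=
  (uSeq N p (2 * n) ^ 2 + vSeq N p (2 * n) ^ 2) / 4

/-- β[n] = b̂_{[1]}^p[n] / √(Υ^p[n]). -/
noncomputable def betaS (N p : ℕ) (n : ℤ) : ℂ := bhat1 N p n / upsilon N p n ^ ((1 : ℂ) / 2)

/-- α[n] = ω^n · β[n+N/2]. -/
noncomputable def alphaS (N p : ℕ) (n : ℤ) : ℂ := ww N ^ n * betaS N p (n + (N : ℤ) / 2)

/-- The first-level wavelet packets ψ_{[1],λ}^p, λ = 0,1, defined via their DFTs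
    ψ̂_{[1],0}^p[n] = β[n] and ψ̂_{[1],1}^p[n] = α[n]. -/
noncomputable def psi1 (N p lam : ℕ) (k : ℤ) : ℂ :=
  (N : ℂ)⁻¹ * ∑ n ∈ Finset.range N,
    (if lam = 0 then betaS N p n else alphaS N p n) * ww N ^ ((k * (n : ℤ)))

end WP

/-! The multiplier of `H` on the DFT side has modulus one except at `0` and `N / 2`, where `x̂`
vanishes by hypothesis; so `H` preserves `∑ ‖x̂[n]‖²`, and Parseval's identity for the DFT and for
its inverse turns this into `‖H x‖ = ‖x‖`. -/

open ComplexConjugate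

namespace IsPrimitiveRoot

variable {ζ : ℂ} {N : ℕ}

theorem sum_pow_mul_conj_pow (hζ : IsPrimitiveRoot ζ N) {n m : ℕ} (hn : n < N) (hm : m < N) :
    ∑ k ∈ Finset.range N, ζ ^ (k * n) * conj (ζ ^ (k * m)) = if n = m then (N : ℂ) else 0 := by
  have hζ0 : ζ ≠ 0 := hζ.ne_zero (by omega)
  have hconj : conj ζ = ζ⁻¹ := (Complex.inv_eq_conj (hζ.norm'_eq_one (by omega))).symm
  have hterm (k : ℕ) : ζ ^ (k * n) * conj (ζ ^ (k * m)) = (ζ ^ n * (ζ ^ m)⁻¹) ^ k := by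
    rw [map_pow, hconj, mul_pow, inv_pow, inv_pow, ← pow_mul, ← pow_mul, mul_comm n, mul_comm m]
  simp_rw [hterm]
  split_ifs with h
  · simp [h, hζ0]
  · have hw : ζ ^ n * (ζ ^ m)⁻¹ ≠ 1 := by
      rw [Ne, mul_inv_eq_one₀ (pow_ne_zero _ hζ0)]
      exact fun H => h (hζ.pow_inj hn hm H)
    rw [geom_sum_eq hw, mul_pow, inv_pow, ← pow_mul, ← pow_mul, mul_comm n, mul_comm m, pow_mul,
      pow_mul, hζ.pow_eq_one]
    simp

theorem sum_norm_sq_sum_mul_pow (hζ : IsPrimitiveRoot ζ N) (a : ℕ → ℂ) :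
    ∑ k ∈ Finset.range N, ‖∑ n ∈ Finset.range N, a n * ζ ^ (k * n)‖ ^ 2
      = N * ∑ n ∈ Finset.range N, ‖a n‖ ^ 2 := by
  apply Complex.ofReal_injective
  push_cast
  simp_rw [← Complex.mul_conj']
  calc ∑ k ∈ Finset.range N, (∑ n ∈ Finset.range N, a n * ζ ^ (k * n)) *
        conj (∑ m ∈ Finset.range N, a m * ζ ^ (k * m))
      = ∑ n ∈ Finset.range N, ∑ m ∈ Finset.range N, a n * conj (a m) *
          ∑ k ∈ Finset.range N, ζ ^ (k * n) * conj (ζ ^ (k * m)) := by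
        simp_rw [map_sum, Finset.sum_mul_sum, Finset.mul_sum]
        rw [Finset.sum_comm]
        refine Finset.sum_congr rfl fun n _ => ?_
        rw [Finset.sum_comm]
        refine Finset.sum_congr rfl fun m _ => Finset.sum_congr rfl fun k _ => ?_
        rw [map_mul]; ring
    _ = ∑ n ∈ Finset.range N, ∑ m ∈ Finset.range N,
          a n * conj (a m) * if n = m then (N : ℂ) else 0 := by
        refine Finset.sum_congr rfl fun n hn => Finset.sum_congr rfl fun m hm => ?_
        rw [hζ.sum_pow_mul_conj_pow (Finset.mem_range.1 hn) (Finset.mem_range.1 hm)]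
    _ = N * ∑ n ∈ Finset.range N, a n * conj (a n) := by
        simp only [mul_ite, mul_zero, Finset.sum_ite_eq, Finset.mul_sum]
        exact Finset.sum_congr rfl fun n hn => by rw [if_pos hn, mul_comm]

end IsPrimitiveRoot

namespace WP

theorem ww_isPrimitiveRoot {N : ℕ} (hN : N ≠ 0) : IsPrimitiveRoot (ww N) N :=
  Complex.isPrimitiveRoot_exp N hN

theorem sum_norm_sq_dft {N : ℕ} (hN : N ≠ 0) (x : ℤ → ℂ) :
    ∑ n ∈ Finset.range N, ‖dft N x n‖ ^ 2 = N * ∑ k ∈ Finset.range N, ‖x k‖ ^ 2 := by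
  rw [← (ww_isPrimitiveRoot hN).inv.sum_norm_sq_sum_mul_pow]
  refine Finset.sum_congr rfl fun n _ => congrArg (‖·‖ ^ 2) <| Finset.sum_congr rfl fun k _ => ?_
  rw [zpow_neg, ← Nat.cast_mul, zpow_natCast, inv_pow, mul_comm, mul_comm k]

def hilbertMultiplier (N n : ℕ) : ℂ :=
  if 0 < n ∧ n < N / 2 then -Complex.I else if N / 2 < n ∧ n < N then Complex.I else 0

theorem sum_norm_sq_hilbertT {N : ℕ} (hN : N ≠ 0) (x : ℤ → ℂ) :
    ∑ k ∈ Finset.range N, ‖hilbertT N x k‖ ^ 2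
      = (N : ℝ)⁻¹ * ∑ n ∈ Finset.range N, ‖hilbertMultiplier N n * dft N x n‖ ^ 2 := by
  have hsynth (k : ℕ) : hilbertT N x k = (N : ℂ)⁻¹ *
      ∑ n ∈ Finset.range N, hilbertMultiplier N n * dft N x n * ww N ^ (k * n) := by
    simp only [hilbertT, hilbertMultiplier, ← Nat.cast_mul, zpow_natCast]
  simp_rw [hsynth, norm_mul ((N : ℂ)⁻¹), mul_pow, ← Finset.mul_sum,
    (ww_isPrimitiveRoot hN).sum_norm_sq_sum_mul_pow, norm_inv, Complex.norm_natCast]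
  field_simp

theorem norm_hilbertMultiplier {N n : ℕ} (hn : n < N) (h0 : n ≠ 0) (h2 : n ≠ N / 2) :
    ‖hilbertMultiplier N n‖ = 1 := by
  unfold hilbertMultiplier
  split_ifs <;> simp
  omega

theorem norm_hilbertMultiplier_mul_dft {N n : ℕ} {x : ℤ → ℂ} (hn : n < N)
    (h0 : dft N x 0 = 0) (h2 : dft N x ((N : ℤ) / 2) = 0) :
    ‖hilbertMultiplier N n * dft N x n‖ = ‖dft N x n‖ := by
  by_cases hn0 : n = 0
  · simp [hn0, h0]
  by_cases hn2 : n = N / 2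
  · have hcast : (n : ℤ) = (N : ℤ) / 2 := by omega
    simp [hcast, h2]
  rw [norm_mul, norm_hilbertMultiplier hn hn0 hn2, one_mul]

theorem hilbert_norm_preserving_general (N : ℕ) (hN : 0 < N) (x : ℤ → ℂ)
    (h0 : dft N x 0 = 0) (h2 : dft N x ((N : ℤ) / 2) = 0) :
    Real.sqrt (∑ k ∈ Finset.range N, ‖hilbertT N x k‖ ^ 2)
      = Real.sqrt (∑ k ∈ Finset.range N, ‖x k‖ ^ 2) := by
  congr 1
  have hN0 : (N : ℝ) ≠ 0 := by positivity
  calc ∑ k ∈ Finset.range N, ‖hilbertT N x k‖ ^ 2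
      = (N : ℝ)⁻¹ * ∑ n ∈ Finset.range N, ‖dft N x n‖ ^ 2 := by
        rw [sum_norm_sq_hilbertT hN.ne']
        congr 1
        exact Finset.sum_congr rfl fun n hn => by
          rw [norm_hilbertMultiplier_mul_dft (Finset.mem_range.1 hn) h0 h2]
    _ = ∑ k ∈ Finset.range N, ‖x k‖ ^ 2 := by
        rw [sum_norm_sq_dft hN.ne', inv_mul_cancel_left₀ hN0]

/-- If x̂[0] = x̂[N/2] = 0 then ‖H(x)‖ = ‖x‖. -/
theorem hilbert_norm_preserving (N : ℕ) (hN : 0 < N) (hNe : Even N) (x : ℤ → ℂ)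
    (hper : ∀ k : ℤ, x (k + N) = x k)
    (h0 : dft N x 0 = 0) (h2 : dft N x ((N : ℤ) / 2) = 0) :
    Real.sqrt (∑ k ∈ Finset.range N, ‖hilbertT N x k‖ ^ 2)
      = Real.sqrt (∑ k ∈ Finset.range N, ‖x k‖ ^ 2) :=
  hilbert_norm_preserving_general N hN x h0 h2

end WP
end

section
/- Let N be a positive integer divisible by 4 and p an integer with 2 ≤ p ≤ N/2; assume u^p[2n]² + v^p[2n]² > 0 for every n. Define the second-level wavelet packets ψ_{[2],ρ}^p ∈ Π[N], ρ = 0,1,2,3, by their DFTs ψ̂_{[2],0}^p[n] = β[n]·β[2n], ψ̂_{[2],1}^p[n] = β[n]·α[2n], ψ̂_{[2],2}^p[n] = α[n]·α[2n], ψ̂_{[2],3}^p[n] = α[n]·β[2n]. Then each ψ_{[2],ρ}^p has norm 1, the 4-sample shifts of each ψ_{[2],ρ}^p are mutually orthogonal, and wavelet packets with different indices ρ are orthogonal to each other; i.e. ⟨ψ_{[2],ρ}^p[·−4l], ψ_{[2],σ}^p[·−4m]⟩ = 1 if ρ = σ and l = m, and = 0 otherwise, for ρ,σ ∈ {0,1,2,3}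 and 0 ≤ l,m < N/4. -/
open MeasureTheory

namespace WP

open scoped ComplexOrder

/-- The second-level wavelet packets ψ_{[2],ρ}^p, ρ = 0,1,2,3, defined via their DFTs
    β[n]β[2n], β[n]α[2n], α[n]α[2n], α[n]β[2n]. -/
noncomputable def psi2 (N p rho : ℕ) (k : ℤ) : ℂ :=
  (N : ℂ)⁻¹ * ∑ n ∈ Finset.range N,
    (if rho = 0 then betaS N p n * betaS N p (2 * n)
     else if rho = 1 then betaS N p n * alphaS N p (2 * n)
     else if rho = 2 then alphaS N p n * alphaS N p (2 * n)
     else alphaS N p n * betaS N p (2 * n)) * ww N ^ ((k * (n : ℤ)))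

section Infra
open Complex Finset

lemma ww_ne_zero (N : ℕ) : ww N ≠ 0 := Complex.exp_ne_zero _

lemma ww_zpow (N : ℕ) (n : ℤ) :
    ww N ^ n = Complex.exp ((n : ℂ) * (2 * Real.pi * Complex.I / N)) := by
  rw [ww, ← Complex.exp_int_mul]

lemma ww_zpow_add (N : ℕ) (a b : ℤ) : ww N ^ (a + b) = ww N ^ a * ww N ^ b :=
  zpow_add₀ (ww_ne_zero N) a b

lemma conj_ww_zpow (N : ℕ) (n : ℤ) :
    (starRingEnd ℂ) (ww N ^ n) = ww N ^ (-n) := by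
  rw [ww_zpow, ww_zpow, ← Complex.exp_conj]
  congr 1
  simp [map_div₀, map_mul, Complex.conj_I, map_ofNat, Complex.conj_ofReal]
  push_cast
  ring

lemma ww_pow_N (N : ℕ) (hN : 0 < N) : ww N ^ (N : ℤ) = 1 := by
  rw [ww_zpow]
  have h : ((N : ℂ)) ≠ 0 := Nat.cast_ne_zero.mpr hN.ne'
  rw [show ((N : ℤ) : ℂ) * (2 * Real.pi * Complex.I / N) = 2 * Real.pi * Complex.I by
    push_cast; field_simp]
  exact Complex.exp_two_pi_mul_I

lemma ww_eq_of_dvd {N : ℕ} (hN : 0 < N) {x y : ℤ} (h : (N : ℤ) ∣ x - y) :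
    ww N ^ x = ww N ^ y := by
  obtain ⟨c, hc⟩ := h
  have : x = y + (N : ℤ) * c := by linarith
  have h1 : ww N ^ ((N : ℤ) * c) = 1 := by
    rw [zpow_mul, ww_pow_N N hN, one_zpow]
  rw [this, ww_zpow_add, h1, mul_one]

lemma ww_half (N : ℕ) (hN : 0 < N) (h2 : 2 ∣ N) : ww N ^ ((N : ℤ) / 2) = -1 := by
  obtain ⟨m, rfl⟩ := h2
  have hm : 0 < m := by omega
  have hmc : ((m : ℂ)) ≠ 0 := Nat.cast_ne_zero.mpr hm.ne'
  rw [ww_zpow]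
  rw [show (((2 * m : ℕ) : ℤ) / 2 : ℤ) = (m : ℤ) by push_cast; omega]
  rw [show ((m : ℤ) : ℂ) * (2 * Real.pi * Complex.I / ((2 * m : ℕ) : ℂ))
      = Real.pi * Complex.I by push_cast; field_simp]
  exact Complex.exp_pi_mul_I

lemma ww_eq_neg_of_dvd {N : ℕ} (hN : 0 < N) (h2 : 2 ∣ N) {x y : ℤ}
    (h : (N : ℤ) ∣ x - y - (N : ℤ) / 2) : ww N ^ x = -(ww N ^ y) := by
  have : ww N ^ x = ww N ^ (y + (N : ℤ) / 2) := by
    apply ww_eq_of_dvd hN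
    have hxy : x - (y + (N : ℤ) / 2) = x - y - (N : ℤ) / 2 := by ring
    rw [hxy]; exact h
  rw [this, ww_zpow_add, ww_half N hN h2]; ring

lemma ww_eq_one_iff (N : ℕ) (hN : 0 < N) (t : ℤ) : ww N ^ t = 1 ↔ (N : ℤ) ∣ t := by
  constructor
  · intro h
    rw [ww_zpow, Complex.exp_eq_one_iff] at h
    obtain ⟨m, hm⟩ := h
    have hNc : ((N : ℂ)) ≠ 0 := Nat.cast_ne_zero.mpr hN.ne'
    have h2pi : (2 * (Real.pi : ℂ) * Complex.I) ≠ 0 := by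
      simp [Real.pi_ne_zero, Complex.I_ne_zero, Complex.ofReal_ne_zero]
    have ht : (t : ℂ) * (2 * Real.pi * Complex.I)
        = ((m : ℂ) * N) * (2 * Real.pi * Complex.I) := by
      calc (t : ℂ) * (2 * Real.pi * Complex.I)
          = ((t : ℂ) * (2 * Real.pi * Complex.I / N)) * N := by field_simp
        _ = ((m : ℂ) * (2 * Real.pi * Complex.I)) * N := by rw [hm]
        _ = _ := by ring
    have ht2 : (t : ℂ) = (m : ℂ) * N := mul_right_cancel₀ h2pi ht
    refine ⟨m, ?_⟩
    have hcast : ((t : ℤ) : ℂ) = (((N : ℤ) * m : ℤ) : ℂ) := by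
      push_cast
      linear_combination ht2
    exact_mod_cast hcast
  · intro ⟨c, hc⟩
    rw [hc, zpow_mul, ww_pow_N N hN, one_zpow]

lemma geom_ww (N : ℕ) (hN : 0 < N) (t : ℤ) :
    ∑ k ∈ Finset.range N, ww N ^ ((k : ℤ) * t) = if (N : ℤ) ∣ t then (N : ℂ) else 0 := by
  split_ifs with h
  · obtain ⟨c, hc⟩ := h
    have : ∀ k ∈ Finset.range N, ww N ^ ((k : ℤ) * t) = 1 := by
      intro k _
      apply (ww_eq_one_iff N hN _).2
      exact ⟨(k : ℤ) * c, by rw [hc]; ring⟩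
    rw [Finset.sum_congr rfl this]; simp
  · have hz : ww N ^ t ≠ 1 := fun hc => h ((ww_eq_one_iff N hN t).1 hc)
    have : ∀ k ∈ Finset.range N, ww N ^ ((k : ℤ) * t) = (ww N ^ t) ^ k := by
      intro k _
      rw [mul_comm, zpow_mul, zpow_natCast]
    rw [Finset.sum_congr rfl this, geom_sum_eq hz]
    have : (ww N ^ t) ^ N = 1 := by
      rw [← zpow_natCast ((ww N) ^ t) N, ← zpow_mul]
      exact (ww_eq_one_iff N hN _).2 ⟨t, by ring⟩
    rw [this]; simp

end Infra

section Bspline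
open Finset

/-- Alternating binomial transform. -/
noncomputable def Talt (p : ℕ) (f : ℕ → ℝ) : ℝ :=
  ∑ k ∈ Finset.range (p + 1), (-1 : ℝ) ^ k * (p.choose k : ℝ) * f k

lemma Talt_succ (p : ℕ) (f : ℕ → ℝ) :
    Talt (p + 1) f = Talt p f - Talt p (fun k => f (k + 1)) := by
  unfold Talt
  rw [Finset.sum_range_succ' _ (p + 1)]
  have h1 : ∑ k ∈ Finset.range (p + 1), (-1 : ℝ) ^ (k + 1) * ((p + 1).choose (k + 1) : ℝ) * f (k + 1)
      = ∑ k ∈ Finset.range (p + 1), ((-1 : ℝ) ^ (k + 1) * (p.choose k : ℝ) * f (k + 1)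
        + (-1 : ℝ) ^ (k + 1) * (p.choose (k + 1) : ℝ) * f (k + 1)) := by
    apply Finset.sum_congr rfl
    intro k _
    rw [Nat.choose_succ_succ]
    push_cast
    ring
  rw [h1, Finset.sum_add_distrib]
  have h2 : ∑ k ∈ Finset.range (p + 1), (-1 : ℝ) ^ k * (p.choose k : ℝ) * f k
      = ∑ k ∈ Finset.range p, (-1 : ℝ) ^ (k + 1) * (p.choose (k + 1) : ℝ) * f (k + 1)
        + (-1 : ℝ) ^ 0 * (p.choose 0 : ℝ) * f 0 := by
    rw [← Finset.sum_range_succ' (fun k => (-1 : ℝ) ^ k * (p.choose k : ℝ) * f k) p]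
  have h3 : ∑ k ∈ Finset.range (p + 1), (-1 : ℝ) ^ (k + 1) * (p.choose (k + 1) : ℝ) * f (k + 1)
      = ∑ k ∈ Finset.range p, (-1 : ℝ) ^ (k + 1) * (p.choose (k + 1) : ℝ) * f (k + 1) := by
    rw [Finset.sum_range_succ]
    simp [Nat.choose_succ_self]
  rw [h3, h2]
  simp only [pow_zero, Nat.choose_zero_right, Nat.cast_one, one_mul, mul_one]
  have h4 : ∑ x ∈ Finset.range (1 + p), (-1 : ℝ) ^ (x + 1) * (p.choose x : ℝ) * f (x + 1)
      = -∑ x ∈ Finset.range (1 + p), (-1 : ℝ) ^ x * (p.choose x : ℝ) * f (x + 1) := by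
    rw [← Finset.sum_neg_distrib]
    exact Finset.sum_congr rfl fun k _ => by ring
  rw [Nat.add_comm p 1] at *
  rw [h4]
  ring

lemma Talt_poly (p : ℕ) : ∀ m : ℕ, m < p → ∀ c : ℝ,
    Talt p (fun k => (c - (k : ℝ)) ^ m) = 0 := by
  induction p with
  | zero => intro m hm; omega
  | succ q ih =>
    intro m hm c
    rw [Talt_succ]
    have hexp : ∀ k : ℕ, (c - (k : ℝ)) ^ m - (c - (k : ℝ) - 1) ^ m
        = ∑ j ∈ Finset.range m, (m.choose j : ℝ) * ((c - 1) - (k : ℝ)) ^ j := by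
      intro k
      have h := add_pow (c - (k : ℝ) - 1) 1 m
      rw [show c - (k : ℝ) - 1 + 1 = c - (k : ℝ) by ring] at h
      rw [h, Finset.sum_range_succ]
      simp only [one_pow, mul_one, Nat.choose_self, Nat.cast_one]
      have : ∀ j ∈ Finset.range m, (c - (k : ℝ) - 1) ^ j * (m.choose j : ℝ)
          = (m.choose j : ℝ) * ((c - 1) - (k : ℝ)) ^ j := by
        intro j _; ring_nf
      rw [Finset.sum_congr rfl this]
      ring
    rcases Nat.lt_or_ge m q with hmq | hmq
    · have e1 := ih m hmq c
      have e2 := ih m hmq (c - 1)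
      have hfe : (fun k : ℕ => (c - ((k : ℕ) + 1 : ℕ) : ℝ) ^ m)
          = (fun k : ℕ => ((c - 1) - (k : ℝ)) ^ m) := by
        funext k; push_cast; ring_nf
      calc Talt q (fun k => (c - (k : ℝ)) ^ m)
            - Talt q (fun k => (c - ((k : ℕ) + 1 : ℕ) : ℝ) ^ m)
          = 0 - 0 := by rw [hfe, e1, e2]
        _ = 0 := by ring
    · have hmq' : m = q := by omega
      subst hmq'
      calc Talt m (fun k => (c - (k : ℝ)) ^ m)
            - Talt m (fun k => (c - ((k : ℕ) + 1 : ℕ) : ℝ) ^ m)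
          = ∑ k ∈ Finset.range (m + 1), (-1 : ℝ) ^ k * (m.choose k : ℝ) *
              ∑ j ∈ Finset.range m, (m.choose j : ℝ) * ((c - 1) - (k : ℝ)) ^ j := by
            unfold Talt
            rw [← Finset.sum_sub_distrib]
            apply Finset.sum_congr rfl
            intro k _
            rw [← hexp k]
            push_cast
            ring
        _ = ∑ j ∈ Finset.range m, (m.choose j : ℝ) *
              ∑ k ∈ Finset.range (m + 1),
                (-1 : ℝ) ^ k * (m.choose k : ℝ) * ((c - 1) - (k : ℝ)) ^ j := by
            simp_rw [Finset.mul_sum]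
            rw [Finset.sum_comm]
            apply Finset.sum_congr rfl; intro j _
            apply Finset.sum_congr rfl; intro k _
            ring
        _ = 0 := by
            apply Finset.sum_eq_zero
            intro j hj
            have hz := ih j (Finset.mem_range.mp hj) (c - 1)
            unfold Talt at hz
            rw [hz, mul_zero]

lemma altsum (p m : ℕ) (hm : m < p) (c : ℝ) :
    ∑ k ∈ Finset.range (p + 1), (-1 : ℝ) ^ k * (p.choose k : ℝ) * (c - (k : ℝ)) ^ m = 0 :=
  Talt_poly p m hm c

lemma bspline_zero_left {p : ℕ} (hp : 2 ≤ p) {t : ℝ} (ht : t + (p : ℝ) / 2 ≤ 0) :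
    bspline p t = 0 := by
  unfold bspline
  rw [Finset.sum_eq_zero, mul_zero]
  intro k _
  have h1 : max (t + (p : ℝ) / 2 - (k : ℝ)) 0 = 0 := by
    apply max_eq_right
    have : (0 : ℝ) ≤ (k : ℝ) := Nat.cast_nonneg k
    linarith
  rw [h1, zero_pow (by omega : p - 1 ≠ 0), mul_zero]

lemma bspline_zero_right {p : ℕ} (hp : 2 ≤ p) {t : ℝ} (ht : (p : ℝ) / 2 ≤ t) :
    bspline p t = 0 := by
  unfold bspline
  have h1 : ∀ k ∈ Finset.range (p + 1),
      (-1 : ℝ) ^ k * (p.choose k : ℝ) * max (t + (p : ℝ) / 2 - (k : ℝ)) 0 ^ (p - 1)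
      = (-1 : ℝ) ^ k * (p.choose k : ℝ) * ((t + (p : ℝ) / 2) - (k : ℝ)) ^ (p - 1) := by
    intro k hk
    have hk' : (k : ℝ) ≤ (p : ℝ) := by
      have := Finset.mem_range.mp hk
      exact_mod_cast Nat.le_of_lt_succ this
    have : max (t + (p : ℝ) / 2 - (k : ℝ)) 0 = t + (p : ℝ) / 2 - (k : ℝ) := by
      apply max_eq_left
      linarith
    rw [this]
  rw [Finset.sum_congr rfl h1, altsum p (p - 1) (by omega) (t + (p : ℝ) / 2), mul_zero]

lemma max_neg_pow {x : ℝ} {m : ℕ} (hm : m ≠ 0) :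
    max (-x) 0 ^ m = (-1 : ℝ) ^ m * (x ^ m - max x 0 ^ m) := by
  rcases le_total x 0 with h | h
  · rw [max_eq_left (by linarith), max_eq_right h, zero_pow hm]
    ring
  · rw [max_eq_right (by linarith), max_eq_left h, zero_pow hm]
    ring

lemma bspline_even {p : ℕ} (hp : 2 ≤ p) (t : ℝ) : bspline p (-t) = bspline p t := by
  unfold bspline
  rw [← Finset.sum_range_reflect]
  have key : ∀ k ∈ Finset.range (p + 1),
      (-1 : ℝ) ^ (p + 1 - 1 - k) * (p.choose (p + 1 - 1 - k) : ℝ) *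
        max (-t + (p : ℝ) / 2 - ((p + 1 - 1 - k : ℕ) : ℝ)) 0 ^ (p - 1)
      = (-1 : ℝ) ^ k * (p.choose k : ℝ) * max (t + (p : ℝ) / 2 - (k : ℝ)) 0 ^ (p - 1)
        - (-1 : ℝ) ^ k * (p.choose k : ℝ) * ((t + (p : ℝ) / 2) - (k : ℝ)) ^ (p - 1) := by
    intro k hk
    have hkp : k ≤ p := Nat.le_of_lt_succ (Finset.mem_range.mp hk)
    have h1 : p + 1 - 1 - k = p - k := by omega
    rw [h1]
    have hcast : ((p - k : ℕ) : ℝ) = (p : ℝ) - (k : ℝ) := by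
      push_cast [hkp]; ring
    rw [Nat.choose_symm hkp, hcast]
    have harg : -t + (p : ℝ) / 2 - ((p : ℝ) - (k : ℝ)) = -(t + (p : ℝ) / 2 - (k : ℝ)) := by
      ring
    rw [harg, max_neg_pow (by omega : p - 1 ≠ 0)]
    have hsgn : (-1 : ℝ) ^ (p - k) * (-1 : ℝ) ^ (p - 1) = -((-1 : ℝ) ^ k) := by
      rcases Nat.even_or_odd k with hk2 | hk2 <;> rcases Nat.even_or_odd p with hp2 | hp2
      · have h5 : Even (p - k) := (Nat.even_sub hkp).mpr (by simp [hp2, hk2])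
        have h6 : Odd (p - 1) := Nat.Even.sub_odd (by omega) hp2 odd_one
        rw [h5.neg_one_pow, h6.neg_one_pow, hk2.neg_one_pow]; ring
      · have h5 : Odd (p - k) := Nat.Odd.sub_even hkp hp2 hk2
        have h6 : Even (p - 1) := Nat.Odd.sub_odd hp2 odd_one
        rw [h5.neg_one_pow, h6.neg_one_pow, hk2.neg_one_pow]; ring
      · have h5 : Odd (p - k) := Nat.Even.sub_odd hkp hp2 hk2
        have h6 : Odd (p - 1) := Nat.Even.sub_odd (by omega) hp2 odd_one
        rw [h5.neg_one_pow, h6.neg_one_pow, hk2.neg_one_pow]; ring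
      · have h5 : Even (p - k) := Nat.Odd.sub_odd hp2 hk2
        have h6 : Even (p - 1) := Nat.Odd.sub_odd hp2 odd_one
        rw [h5.neg_one_pow, h6.neg_one_pow, hk2.neg_one_pow]; ring
    calc (-1 : ℝ) ^ (p - k) * (p.choose k : ℝ) *
          ((-1 : ℝ) ^ (p - 1) * ((t + (p : ℝ) / 2 - (k : ℝ)) ^ (p - 1)
            - max (t + (p : ℝ) / 2 - (k : ℝ)) 0 ^ (p - 1)))
        = ((-1 : ℝ) ^ (p - k) * (-1 : ℝ) ^ (p - 1)) * (p.choose k : ℝ) *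
            ((t + (p : ℝ) / 2 - (k : ℝ)) ^ (p - 1)
              - max (t + (p : ℝ) / 2 - (k : ℝ)) 0 ^ (p - 1)) := by ring
      _ = _ := by rw [hsgn]; ring
  rw [Finset.sum_congr rfl key, Finset.sum_sub_distrib]
  rw [altsum p (p - 1) (by omega) (t + (p : ℝ) / 2)]
  ring

end Bspline

section Mid
open Complex Finset

lemma bs1_eval {N : ℕ} (p : ℕ) (hN : 0 < N) {j : ℤ}
    (h1 : -((N : ℤ) / 2) ≤ j) (h2 : j < (N : ℤ) / 2) :
    bs1 N p j = ((bspline p ((j : ℝ) / 2) : ℝ) : ℂ) / 2 := by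
  unfold bs1
  have hmod : (j + (N : ℤ) / 2) % (N : ℤ) = j + (N : ℤ) / 2 :=
    Int.emod_eq_of_lt (by omega) (by omega)
  rw [hmod, show j + (N : ℤ) / 2 - (N : ℤ) / 2 = j from by ring]

lemma bs1_add_mul {N : ℕ} (p : ℕ) (j s : ℤ) : bs1 N p (j + (N : ℤ) * s) = bs1 N p j := by
  unfold bs1
  rw [show j + (N : ℤ) * s + (N : ℤ) / 2 = (j + (N : ℤ) / 2) + (N : ℤ) * s from by ring,
    Int.add_mul_emod_self_left]

lemma bs1_even {N p : ℕ} (hN : 0 < N) (h2 : 2 ∣ N) (hp : 2 ≤ p) (j : ℤ) :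
    bs1 N p (-j) = bs1 N p j := by
  have hh : 2 * ((N : ℤ) / 2) = N := by omega
  set h : ℤ := (N : ℤ) / 2 with hdef
  -- reduce to fundamental domain
  have hNpos : (0 : ℤ) < N := by exact_mod_cast hN
  set s : ℤ := (j + h) / (N : ℤ) with hs
  have hr1 : 0 ≤ (j + h) % (N : ℤ) := Int.emod_nonneg _ (by omega)
  have hr2 : (j + h) % (N : ℤ) < N := Int.emod_lt_of_pos _ hNpos
  have hrdef : (j + h) % (N : ℤ) = j + h - (N : ℤ) * s := by
    rw [hs, Int.emod_def]
  set r : ℤ := j - (N : ℤ) * s with hrr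
  have hran1 : -h ≤ r := by omega
  have hran2 : r < h := by omega
  have hj : j = r + (N : ℤ) * s := by omega
  have hcore : bs1 N p (-r) = bs1 N p r := by
    rcases eq_or_lt_of_le hran1 with heq | hlt
    · -- r = -h : -r = h = -h + N
      have h1 : -r = -h + (N : ℤ) * 1 := by omega
      rw [h1, bs1_add_mul, ← heq]
    · have e1 : bs1 N p (-r) = ((bspline p (((-r : ℤ) : ℝ) / 2) : ℝ) : ℂ) / 2 :=
        bs1_eval p hN (by omega) (by omega)
      have e2 : bs1 N p r = ((bspline p (((r : ℤ) : ℝ) / 2) : ℝ) : ℂ) / 2 :=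
        bs1_eval p hN (by omega) (by omega)
      rw [e1, e2]
      congr 2
      rw [show (((-r : ℤ) : ℝ) / 2) = -(((r : ℤ) : ℝ) / 2) from by push_cast; ring]
      rw [bspline_even hp]
  calc bs1 N p (-j) = bs1 N p (-r + (N : ℤ) * (-s)) := by rw [hj]; ring_nf
    _ = bs1 N p (-r) := bs1_add_mul p _ _
    _ = bs1 N p r := hcore
    _ = bs1 N p (r + (N : ℤ) * s) := (bs1_add_mul p r s).symm
    _ = bs1 N p j := by rw [← hj]

lemma conj_bs1 {N p : ℕ} (j : ℤ) : (starRingEnd ℂ) (bs1 N p j) = bs1 N p j := by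
  unfold bs1
  rw [map_div₀, Complex.conj_ofReal, map_ofNat]

lemma conj_bhat1 {N p : ℕ} (hN : 0 < N) (h2 : 2 ∣ N) (hp : 2 ≤ p) (n : ℤ) :
    (starRingEnd ℂ) (bhat1 N p n) = bhat1 N p n := by
  unfold bhat1
  rw [map_sum]
  have hterm : ∀ k ∈ Finset.range N, (starRingEnd ℂ)
      (ww N ^ (-(((k : ℤ) - (N : ℤ) / 2) * n)) * bs1 N p ((k : ℤ) - (N : ℤ) / 2))
      = ww N ^ ((((k : ℤ) - (N : ℤ) / 2) * n)) * bs1 N p ((k : ℤ) - (N : ℤ) / 2) := by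
    intro k _
    rw [map_mul, conj_ww_zpow, conj_bs1, neg_neg]
  rw [Finset.sum_congr rfl hterm]
  -- now reindex k ↦ (N - k) % N
  have hh : 2 * ((N : ℤ) / 2) = N := by omega
  apply Finset.sum_nbij' (i := fun k => (N - k) % N) (j := fun k => (N - k) % N)
  · intro a ha
    exact Finset.mem_range.mpr (Nat.mod_lt _ hN)
  · intro a ha
    exact Finset.mem_range.mpr (Nat.mod_lt _ hN)
  · intro a ha
    rcases Nat.eq_zero_or_pos a with rfl | hpos
    · simp
    · have ha' : a < N := Finset.mem_range.mp ha
      rw [Nat.mod_eq_of_lt (show N - a < N by omega),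
        show N - (N - a) = a from by omega, Nat.mod_eq_of_lt ha']
  · intro a ha
    rcases Nat.eq_zero_or_pos a with rfl | hpos
    · simp
    · have ha' : a < N := Finset.mem_range.mp ha
      rw [Nat.mod_eq_of_lt (show N - a < N by omega),
        show N - (N - a) = a from by omega, Nat.mod_eq_of_lt ha']
  · intro k hk
    have hk' : k < N := Finset.mem_range.mp hk
    rcases Nat.eq_zero_or_pos k with rfl | hpos
    · simp only [Nat.sub_zero, Nat.mod_self, Nat.cast_zero]
      congr 1
      apply ww_eq_of_dvd hN
      exact ⟨-n, by linear_combination (-(n : ℤ)) * hh⟩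
    · rw [Nat.mod_eq_of_lt (show N - k < N by omega)]
      have hcast : (((N - k : ℕ) : ℤ)) = (N : ℤ) - k := by push_cast [hk'.le]; ring
      rw [hcast]
      have hzeq : ((N : ℤ) - k - (N : ℤ) / 2) = -((k : ℤ) - (N : ℤ) / 2) := by omega
      rw [hzeq, bs1_even hN h2 hp]
      congr 1
      rw [show -(-((k : ℤ) - (N : ℤ) / 2) * n) = ((k : ℤ) - (N : ℤ) / 2) * n from by ring]

lemma uSeq_per {N p : ℕ} (hN : 0 < N) {x y : ℤ} (h : (N : ℤ) ∣ x - y) :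
    uSeq N p x = uSeq N p y := by
  unfold uSeq
  apply Finset.sum_congr rfl
  intro k _
  congr 1
  apply ww_eq_of_dvd hN
  have : -(((k : ℤ) - (N : ℤ) / 2) * x) - -(((k : ℤ) - (N : ℤ) / 2) * y)
      = -((k : ℤ) - (N : ℤ) / 2) * (x - y) := by ring
  rw [this]
  exact Dvd.dvd.mul_left h _

lemma vSeq_per {N p : ℕ} (hN : 0 < N) {x y : ℤ} (h : (2 * (N : ℤ)) ∣ x - y) :
    vSeq N p x = vSeq N p y := by
  obtain ⟨c, hc⟩ := h
  unfold vSeq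
  have hNc : ((N : ℂ)) ≠ 0 := Nat.cast_ne_zero.mpr hN.ne'
  have hphase : Complex.exp (-Real.pi * Complex.I * (x : ℂ) / N)
      = Complex.exp (-Real.pi * Complex.I * (y : ℂ) / N) := by
    have hx : x = y + 2 * (N : ℤ) * c := by linarith
    rw [hx]
    rw [show -Real.pi * Complex.I * ((( y + 2 * (N : ℤ) * c : ℤ)) : ℂ) / N
        = -Real.pi * Complex.I * (y : ℂ) / N + (-c : ℤ) * (2 * Real.pi * Complex.I) from by
      push_cast; field_simp; ring]
    rw [Complex.exp_add, Complex.exp_int_mul_two_pi_mul_I, mul_one]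
  rw [hphase]
  congr 1
  apply Finset.sum_congr rfl
  intro k _
  congr 1
  apply ww_eq_of_dvd hN
  have : -(((k : ℤ) - (N : ℤ) / 2) * x) - -(((k : ℤ) - (N : ℤ) / 2) * y)
      = -(((k : ℤ) - (N : ℤ) / 2) * 2 * c) * N := by
    linear_combination (-((k : ℤ) - (N : ℤ) / 2)) * hc
  rw [this]
  exact Dvd.intro_left _ rfl

lemma vSeq_add_N {N p : ℕ} (hN : 0 < N) (m : ℤ) :
    vSeq N p (m + N) = -vSeq N p m := by
  unfold vSeq
  have hNc : ((N : ℂ)) ≠ 0 := Nat.cast_ne_zero.mpr hN.ne'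
  have hphase : Complex.exp (-Real.pi * Complex.I * (((m + N : ℤ)) : ℂ) / N)
      = -Complex.exp (-Real.pi * Complex.I * (m : ℂ) / N) := by
    rw [show -Real.pi * Complex.I * (((m + N : ℤ)) : ℂ) / N
        = -Real.pi * Complex.I * (m : ℂ) / N + -(Real.pi * Complex.I) from by
      push_cast; field_simp; ring]
    rw [Complex.exp_add, Complex.exp_neg, Complex.exp_pi_mul_I]
    norm_num
  rw [hphase]
  have hsum : ∑ k ∈ Finset.range N,
      ww N ^ (-(((k : ℤ) - (N : ℤ) / 2) * (m + N))) * ((bspline p ((k : ℝ) - (N : ℝ) / 2 + 1 / 2) : ℝ) : ℂ)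
      = ∑ k ∈ Finset.range N,
      ww N ^ (-(((k : ℤ) - (N : ℤ) / 2) * m)) * ((bspline p ((k : ℝ) - (N : ℝ) / 2 + 1 / 2) : ℝ) : ℂ) := by
    apply Finset.sum_congr rfl
    intro k _
    congr 1
    apply ww_eq_of_dvd hN
    have : -(((k : ℤ) - (N : ℤ) / 2) * (m + N)) - -(((k : ℤ) - (N : ℤ) / 2) * m)
        = -((k : ℤ) - (N : ℤ) / 2) * N := by ring
    rw [this]
    exact Dvd.intro_left _ rfl
  rw [hsum]
  ring

end Mid

section Split
open Complex Finset

lemma sum_range_even_odd (f : ℕ → ℂ) (m : ℕ) :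
    ∑ k ∈ Finset.range (2 * m), f k
      = ∑ a ∈ Finset.range m, f (2 * a) + ∑ a ∈ Finset.range m, f (2 * a + 1) := by
  induction m with
  | zero => simp
  | succ m ih =>
    rw [show 2 * (m + 1) = 2 * m + 1 + 1 from by ring, Finset.sum_range_succ,
      Finset.sum_range_succ, ih, Finset.sum_range_succ, Finset.sum_range_succ]
    ring

lemma uSeq_eq {N p d : ℕ} (hNd : N = 4 * d) (hd : 0 < d) (hp : 2 ≤ p) (hpN : p ≤ N / 2)
    (m : ℤ) :
    uSeq N p m = ∑ a ∈ Finset.range (2 * d),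
      ww N ^ (-(((a : ℤ) - (d : ℤ)) * m)) * ((bspline p ((a : ℝ) - (d : ℝ)) : ℝ) : ℂ) := by
  have hpd : (p : ℝ) ≤ 2 * (d : ℝ) := by
    have : p ≤ 2 * d := by omega
    exact_mod_cast this
  unfold uSeq
  have h1 : ∀ k ∈ Finset.range N,
      ww N ^ (-(((k : ℤ) - (N : ℤ) / 2) * m)) * ((bspline p ((k : ℝ) - (N : ℝ) / 2) : ℝ) : ℂ)
      = ww N ^ (-(((k : ℤ) - 2 * (d : ℤ)) * m)) * ((bspline p ((k : ℝ) - 2 * (d : ℝ)) : ℝ) : ℂ) := by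
    intro k _
    have e1 : (N : ℤ) / 2 = 2 * (d : ℤ) := by omega
    have e2 : (N : ℝ) / 2 = 2 * (d : ℝ) := by
      rw [hNd]; push_cast; ring
    rw [e1, e2]
  rw [Finset.sum_congr rfl h1]
  have h2 : Finset.range N = Finset.Ico 0 N := by rw [Finset.range_eq_Ico]
  have hsub : Finset.Ico d (3 * d) ⊆ Finset.range N := by
    intro x hx
    simp only [Finset.mem_Ico] at hx
    exact Finset.mem_range.mpr (by omega)
  rw [← Finset.sum_subset hsub]
  · rw [Finset.sum_Ico_eq_sum_range, show 3 * d - d = 2 * d from by omega]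
    apply Finset.sum_congr rfl
    intro a _
    have e3 : ((d + a : ℕ) : ℤ) - 2 * (d : ℤ) = (a : ℤ) - (d : ℤ) := by push_cast; ring
    have e4 : ((d + a : ℕ) : ℝ) - 2 * (d : ℝ) = (a : ℝ) - (d : ℝ) := by push_cast; ring
    rw [e3, e4]
  · intro x hx hnx
    simp only [Finset.mem_range] at hx
    simp only [Finset.mem_Ico, not_and, not_lt] at hnx
    have hx0 : x < d ∨ 3 * d ≤ x := by
      rcases Nat.lt_or_ge x d with h | h
      · exact Or.inl h
      · exact Or.inr (hnx h)
    have hz : bspline p ((x : ℝ) - 2 * (d : ℝ)) = 0 := by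
      rcases hx0 with h | h
      · apply bspline_zero_left hp
        have : (x : ℝ) ≤ (d : ℝ) - 1 := by
          have : (x : ℝ) + 1 ≤ (d : ℝ) := by exact_mod_cast h
          linarith
        linarith
      · apply bspline_zero_right hp
        have : 3 * (d : ℝ) ≤ (x : ℝ) := by exact_mod_cast h
        linarith
    rw [hz]
    simp

lemma vSeq_sum_eq {N p d : ℕ} (hNd : N = 4 * d) (hd : 0 < d) (hp : 2 ≤ p) (hpN : p ≤ N / 2)
    (m : ℤ) :
    ∑ k ∈ Finset.range N,
        ww N ^ (-(((k : ℤ) - (N : ℤ) / 2) * m)) * ((bspline p ((k : ℝ) - (N : ℝ) / 2 + 1 / 2) : ℝ) : ℂ)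
      = ∑ a ∈ Finset.range (2 * d),
        ww N ^ (-(((a : ℤ) - (d : ℤ)) * m)) * ((bspline p ((a : ℝ) - (d : ℝ) + 1 / 2) : ℝ) : ℂ) := by
  have hpd : (p : ℝ) ≤ 2 * (d : ℝ) := by
    have : p ≤ 2 * d := by omega
    exact_mod_cast this
  have h1 : ∀ k ∈ Finset.range N,
      ww N ^ (-(((k : ℤ) - (N : ℤ) / 2) * m)) * ((bspline p ((k : ℝ) - (N : ℝ) / 2 + 1 / 2) : ℝ) : ℂ)
      = ww N ^ (-(((k : ℤ) - 2 * (d : ℤ)) * m)) * ((bspline p ((k : ℝ) - 2 * (d : ℝ) + 1 / 2) : ℝ) : ℂ) := by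
    intro k _
    have e1 : (N : ℤ) / 2 = 2 * (d : ℤ) := by omega
    have e2 : (N : ℝ) / 2 = 2 * (d : ℝ) := by
      rw [hNd]; push_cast; ring
    rw [e1, e2]
  rw [Finset.sum_congr rfl h1]
  have hsub : Finset.Ico d (3 * d) ⊆ Finset.range N := by
    intro x hx
    simp only [Finset.mem_Ico] at hx
    exact Finset.mem_range.mpr (by omega)
  rw [← Finset.sum_subset hsub]
  · rw [Finset.sum_Ico_eq_sum_range, show 3 * d - d = 2 * d from by omega]
    apply Finset.sum_congr rfl
    intro a _
    have e3 : ((d + a : ℕ) : ℤ) - 2 * (d : ℤ) = (a : ℤ) - (d : ℤ) := by push_cast; ring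
    have e4 : ((d + a : ℕ) : ℝ) - 2 * (d : ℝ) + 1 / 2 = (a : ℝ) - (d : ℝ) + 1 / 2 := by
      push_cast; ring
    rw [e3, e4]
  · intro x hx hnx
    simp only [Finset.mem_range] at hx
    simp only [Finset.mem_Ico, not_and, not_lt] at hnx
    have hx0 : x < d ∨ 3 * d ≤ x := by
      rcases Nat.lt_or_ge x d with h | h
      · exact Or.inl h
      · exact Or.inr (hnx h)
    have hz : bspline p ((x : ℝ) - 2 * (d : ℝ) + 1 / 2) = 0 := by
      rcases hx0 with h | h
      · apply bspline_zero_left hp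
        have : (x : ℝ) + 1 ≤ (d : ℝ) := by exact_mod_cast h
        linarith
      · apply bspline_zero_right hp
        have : 3 * (d : ℝ) ≤ (x : ℝ) := by exact_mod_cast h
        linarith
    rw [hz]
    simp

lemma bhat1_split {N p d : ℕ} (hNd : N = 4 * d) (hd : 0 < d) (hp : 2 ≤ p) (hpN : p ≤ N / 2)
    (n : ℤ) :
    bhat1 N p n = (uSeq N p (2 * n) + vSeq N p (2 * n)) / 2 := by
  have hN : 0 < N := by omega
  have hNz : (0 : ℤ) < N := by exact_mod_cast hN
  have e1 : (N : ℤ) / 2 = 2 * (d : ℤ) := by omega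
  unfold bhat1
  rw [show Finset.range N = Finset.range (2 * (2 * d)) from by
    rw [show N = 2 * (2 * d) from by omega]]
  rw [sum_range_even_odd (fun k =>
    ww N ^ (-(((k : ℤ) - (N : ℤ) / 2) * n)) * bs1 N p ((k : ℤ) - (N : ℤ) / 2)) (2 * d)]
  have heven : ∑ a ∈ Finset.range (2 * d),
      ww N ^ (-((((2 * a : ℕ) : ℤ) - (N : ℤ) / 2) * n)) * bs1 N p (((2 * a : ℕ) : ℤ) - (N : ℤ) / 2)
      = uSeq N p (2 * n) / 2 := by
    rw [uSeq_eq hNd hd hp hpN, Finset.sum_div]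
    apply Finset.sum_congr rfl
    intro a ha
    have ha' : a < 2 * d := Finset.mem_range.mp ha
    have hb : bs1 N p (((2 * a : ℕ) : ℤ) - (N : ℤ) / 2)
        = ((bspline p (((((2 * a : ℕ) : ℤ) - (N : ℤ) / 2 : ℤ) : ℝ) / 2) : ℝ) : ℂ) / 2 := by
      apply bs1_eval p hN
      · omega
      · push_cast; omega
    rw [hb]
    have harg : (((((2 * a : ℕ) : ℤ) - (N : ℤ) / 2 : ℤ) : ℝ) / 2) = (a : ℝ) - (d : ℝ) := by
      rw [e1]; push_cast; ring
    rw [harg]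
    have hexp : (-((((2 * a : ℕ) : ℤ) - (N : ℤ) / 2) * n)) = (-(((a : ℤ) - (d : ℤ)) * (2 * n))) := by
      rw [e1]; push_cast; ring
    rw [hexp]
    ring
  have hodd : ∑ a ∈ Finset.range (2 * d),
      ww N ^ (-((((2 * a + 1 : ℕ) : ℤ) - (N : ℤ) / 2) * n)) * bs1 N p (((2 * a + 1 : ℕ) : ℤ) - (N : ℤ) / 2)
      = vSeq N p (2 * n) / 2 := by
    have hv : vSeq N p (2 * n) = ww N ^ (-n) * ∑ a ∈ Finset.range (2 * d),
        ww N ^ (-(((a : ℤ) - (d : ℤ)) * (2 * n))) * ((bspline p ((a : ℝ) - (d : ℝ) + 1 / 2) : ℝ) : ℂ) := by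
      unfold vSeq
      rw [vSeq_sum_eq hNd hd hp hpN]
      congr 1
      rw [ww_zpow]
      congr 1
      push_cast
      ring
    rw [hv]
    rw [Finset.mul_sum, Finset.sum_div]
    apply Finset.sum_congr rfl
    intro a ha
    have ha' : a < 2 * d := Finset.mem_range.mp ha
    have hb : bs1 N p (((2 * a + 1 : ℕ) : ℤ) - (N : ℤ) / 2)
        = ((bspline p (((((2 * a + 1 : ℕ) : ℤ) - (N : ℤ) / 2 : ℤ) : ℝ) / 2) : ℝ) : ℂ) / 2 := by
      apply bs1_eval p hN
      · omega
      · push_cast; omega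
    rw [hb]
    have harg : (((((2 * a + 1 : ℕ) : ℤ) - (N : ℤ) / 2 : ℤ) : ℝ) / 2) = (a : ℝ) - (d : ℝ) + 1 / 2 := by
      rw [e1]; push_cast; ring
    rw [harg]
    have hexp : (-((((2 * a + 1 : ℕ) : ℤ) - (N : ℤ) / 2) * n))
        = (-n) + (-(((a : ℤ) - (d : ℤ)) * (2 * n))) := by
      rw [e1]; push_cast; ring
    rw [hexp, ww_zpow_add]
    ring
  rw [heven, hodd]
  ring

end Split

section Beta
open Complex Finset
open scoped ComplexOrder

lemma ups_pos_real {N p : ℕ} (n : ℤ)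
    (hpos : 0 < uSeq N p (2 * n) ^ 2 + vSeq N p (2 * n) ^ 2) :
    0 < (upsilon N p n).re ∧ (upsilon N p n).im = 0 := by
  rw [Complex.lt_def] at hpos
  obtain ⟨hre, him⟩ := hpos
  simp only [Complex.zero_re, Complex.zero_im] at hre him
  constructor
  · unfold upsilon
    rw [Complex.div_re, ← him]
    norm_num [Complex.re_ofNat, Complex.im_ofNat, Complex.normSq_apply]
    simp only [Complex.add_re] at hre
    linarith
  · unfold upsilon
    rw [Complex.div_im, ← him]
    norm_num [Complex.re_ofNat, Complex.im_ofNat, Complex.normSq_apply]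

lemma ups_ofReal {N p : ℕ} (n : ℤ)
    (hpos : 0 < uSeq N p (2 * n) ^ 2 + vSeq N p (2 * n) ^ 2) :
    upsilon N p n = (((upsilon N p n).re : ℝ) : ℂ) := by
  obtain ⟨h1, h2⟩ := ups_pos_real n hpos
  exact Complex.ext (by simp) (by simp [h2])

lemma ups_ne_zero {N p : ℕ} (n : ℤ)
    (hpos : 0 < uSeq N p (2 * n) ^ 2 + vSeq N p (2 * n) ^ 2) :
    upsilon N p n ≠ 0 := by
  obtain ⟨h1, _⟩ := ups_pos_real n hpos
  intro hz
  rw [hz] at h1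
  simp at h1

lemma ups_sqrt_sq {N p : ℕ} (n : ℤ)
    (hpos : 0 < uSeq N p (2 * n) ^ 2 + vSeq N p (2 * n) ^ 2) :
    upsilon N p n ^ ((1 : ℂ) / 2) * upsilon N p n ^ ((1 : ℂ) / 2) = upsilon N p n := by
  rw [← Complex.cpow_add _ _ (ups_ne_zero n hpos)]
  norm_num

lemma ups_sqrt_ne_zero {N p : ℕ} (n : ℤ)
    (hpos : 0 < uSeq N p (2 * n) ^ 2 + vSeq N p (2 * n) ^ 2) :
    upsilon N p n ^ ((1 : ℂ) / 2) ≠ 0 := by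
  intro hz
  have := ups_sqrt_sq n hpos
  rw [hz, mul_zero] at this
  exact ups_ne_zero n hpos this.symm

lemma conj_ups_sqrt {N p : ℕ} (n : ℤ)
    (hpos : 0 < uSeq N p (2 * n) ^ 2 + vSeq N p (2 * n) ^ 2) :
    (starRingEnd ℂ) (upsilon N p n ^ ((1 : ℂ) / 2)) = upsilon N p n ^ ((1 : ℂ) / 2) := by
  obtain ⟨h1, _⟩ := ups_pos_real n hpos
  rw [ups_ofReal n hpos]
  rw [show ((1 : ℂ) / 2) = (((1 / 2 : ℝ) : ℝ) : ℂ) from by norm_num]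
  rw [← Complex.ofReal_cpow h1.le]
  exact Complex.conj_ofReal _

lemma conj_betaS {N p : ℕ} (hN : 0 < N) (h2 : 2 ∣ N) (hp : 2 ≤ p) (n : ℤ)
    (hpos : 0 < uSeq N p (2 * n) ^ 2 + vSeq N p (2 * n) ^ 2) :
    (starRingEnd ℂ) (betaS N p n) = betaS N p n := by
  unfold betaS
  rw [map_div₀, conj_bhat1 hN h2 hp, conj_ups_sqrt n hpos]

lemma ups_per {N p : ℕ} (hN : 0 < N) {x y : ℤ} (h : (N : ℤ) ∣ x - y) :
    upsilon N p x = upsilon N p y := by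
  unfold upsilon
  have hu : uSeq N p (2 * x) = uSeq N p (2 * y) := by
    apply uSeq_per hN
    rw [show 2 * x - 2 * y = 2 * (x - y) from by ring]
    exact Dvd.dvd.mul_left h 2
  have hv : vSeq N p (2 * x) = vSeq N p (2 * y) := by
    apply vSeq_per hN
    rw [show 2 * x - 2 * y = 2 * (x - y) from by ring]
    exact mul_dvd_mul_left 2 h
  rw [hu, hv]

lemma bhat1_per {N p : ℕ} (hN : 0 < N) {x y : ℤ} (h : (N : ℤ) ∣ x - y) :
    bhat1 N p x = bhat1 N p y := by
  unfold bhat1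
  apply Finset.sum_congr rfl
  intro k _
  congr 1
  apply ww_eq_of_dvd hN
  rw [show -(((k : ℤ) - (N : ℤ) / 2) * x) - -(((k : ℤ) - (N : ℤ) / 2) * y)
      = -((k : ℤ) - (N : ℤ) / 2) * (x - y) from by ring]
  exact Dvd.dvd.mul_left h _

lemma betaS_per {N p : ℕ} (hN : 0 < N) {x y : ℤ} (h : (N : ℤ) ∣ x - y) :
    betaS N p x = betaS N p y := by
  unfold betaS
  rw [bhat1_per hN h, ups_per hN h]

lemma ups_half {N p d : ℕ} (hNd : N = 4 * d) (hd : 0 < d) (x : ℤ) :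
    upsilon N p (x + (N : ℤ) / 2) = upsilon N p x := by
  have hN : 0 < N := by omega
  have e1 : 2 * (x + (N : ℤ) / 2) = 2 * x + N := by omega
  unfold upsilon
  rw [e1]
  have hu : uSeq N p (2 * x + N) = uSeq N p (2 * x) := by
    apply uSeq_per hN
    simp
  have hv : vSeq N p (2 * x + N) = -vSeq N p (2 * x) := vSeq_add_N hN (2 * x)
  rw [hu, hv]
  ring_nf

lemma pillar {N p d : ℕ} (hNd : N = 4 * d) (hd : 0 < d) (hp : 2 ≤ p) (hpN : p ≤ N / 2)
    (hpos : ∀ n : ℤ, 0 < uSeq N p (2 * n) ^ 2 + vSeq N p (2 * n) ^ 2) (n : ℤ) :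
    betaS N p n ^ 2 + betaS N p (n + (N : ℤ) / 2) ^ 2 = 2 := by
  have hN : 0 < N := by omega
  have h2 : 2 ∣ N := by omega
  unfold betaS
  rw [div_pow, div_pow]
  rw [show (upsilon N p n ^ ((1 : ℂ) / 2)) ^ 2
      = upsilon N p n ^ ((1 : ℂ) / 2) * upsilon N p n ^ ((1 : ℂ) / 2) from sq _]
  rw [show (upsilon N p (n + (N : ℤ) / 2) ^ ((1 : ℂ) / 2)) ^ 2
      = upsilon N p (n + (N : ℤ) / 2) ^ ((1 : ℂ) / 2)
        * upsilon N p (n + (N : ℤ) / 2) ^ ((1 : ℂ) / 2) from sq _]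
  rw [ups_sqrt_sq n (hpos n), ups_sqrt_sq _ (hpos _)]
  rw [ups_half hNd hd]
  rw [bhat1_split hNd hd hp hpN n]
  have hb2 : bhat1 N p (n + (N : ℤ) / 2)
      = (uSeq N p (2 * n) - vSeq N p (2 * n)) / 2 := by
    rw [bhat1_split hNd hd hp hpN (n + (N : ℤ) / 2)]
    have e1 : 2 * (n + (N : ℤ) / 2) = 2 * n + N := by omega
    rw [e1]
    have hu : uSeq N p (2 * n + N) = uSeq N p (2 * n) := by
      apply uSeq_per hN; simp
    rw [hu, vSeq_add_N hN (2 * n)]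
    ring
  rw [hb2]
  unfold upsilon
  have hne : uSeq N p (2 * n) ^ 2 + vSeq N p (2 * n) ^ 2 ≠ 0 := (hpos n).ne'
  field_simp
  ring

lemma alphaS_eq {N p : ℕ} (n : ℤ) :
    alphaS N p n = ww N ^ n * betaS N p (n + (N : ℤ) / 2) := rfl

end Beta

section Parseval
open Complex Finset

lemma inner1_eval {N : ℕ} (hN : 0 < N) (F G : ℤ → ℂ) (a b : ℤ) :
    inner1 N (fun k => (N : ℂ)⁻¹ * ∑ n ∈ Finset.range N, F n * ww N ^ ((k - a) * (n : ℤ)))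
        (fun k => (N : ℂ)⁻¹ * ∑ n ∈ Finset.range N, G n * ww N ^ ((k - b) * (n : ℤ)))
      = (N : ℂ)⁻¹ * ∑ n ∈ Finset.range N,
          F n * (starRingEnd ℂ) (G n) * ww N ^ ((n : ℤ) * (b - a)) := by
  have hNc : ((N : ℂ)) ≠ 0 := Nat.cast_ne_zero.mpr hN.ne'
  unfold inner1
  have step1 : ∀ k : ℕ,
      ((N : ℂ)⁻¹ * ∑ n ∈ Finset.range N, F n * ww N ^ (((k : ℤ) - a) * (n : ℤ))) *
        (starRingEnd ℂ) ((N : ℂ)⁻¹ * ∑ m ∈ Finset.range N, G m * ww N ^ (((k : ℤ) - b) * (m : ℤ)))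
      = (N : ℂ)⁻¹ * (N : ℂ)⁻¹ * ∑ n ∈ Finset.range N, ∑ m ∈ Finset.range N,
          F n * (starRingEnd ℂ) (G m) * ww N ^ ((m : ℤ) * b - (n : ℤ) * a)
            * ww N ^ ((k : ℤ) * ((n : ℤ) - (m : ℤ))) := by
    intro k
    rw [map_mul, map_sum]
    have h1 : (starRingEnd ℂ) ((N : ℂ)⁻¹) = (N : ℂ)⁻¹ := by
      rw [map_inv₀, Complex.conj_natCast]
    rw [h1]
    have h2 : ∀ m ∈ Finset.range N,
        (starRingEnd ℂ) (G m * ww N ^ (((k : ℤ) - b) * (m : ℤ)))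
        = (starRingEnd ℂ) (G m) * ww N ^ (-(((k : ℤ) - b) * (m : ℤ))) := by
      intro m _
      rw [map_mul, conj_ww_zpow]
    rw [Finset.sum_congr rfl h2]
    rw [show ((N : ℂ)⁻¹ * ∑ n ∈ Finset.range N, F n * ww N ^ (((k : ℤ) - a) * (n : ℤ))) *
        ((N : ℂ)⁻¹ * ∑ m ∈ Finset.range N,
          (starRingEnd ℂ) (G m) * ww N ^ (-(((k : ℤ) - b) * (m : ℤ))))
      = (N : ℂ)⁻¹ * (N : ℂ)⁻¹ *
        ((∑ n ∈ Finset.range N, F n * ww N ^ (((k : ℤ) - a) * (n : ℤ))) *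
         (∑ m ∈ Finset.range N,
          (starRingEnd ℂ) (G m) * ww N ^ (-(((k : ℤ) - b) * (m : ℤ))))) from by ring]
    rw [Finset.sum_mul_sum]
    congr 1
    apply Finset.sum_congr rfl
    intro n _
    apply Finset.sum_congr rfl
    intro m _
    rw [show F n * ww N ^ (((k : ℤ) - a) * (n : ℤ)) *
        ((starRingEnd ℂ) (G m) * ww N ^ (-(((k : ℤ) - b) * (m : ℤ))))
      = F n * (starRingEnd ℂ) (G m) *
        (ww N ^ (((k : ℤ) - a) * (n : ℤ)) * ww N ^ (-(((k : ℤ) - b) * (m : ℤ)))) from by ring]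
    rw [← ww_zpow_add]
    rw [show ((k : ℤ) - a) * (n : ℤ) + -(((k : ℤ) - b) * (m : ℤ))
      = ((m : ℤ) * b - (n : ℤ) * a) + (k : ℤ) * ((n : ℤ) - (m : ℤ)) from by ring]
    rw [ww_zpow_add]
    ring
  rw [Finset.sum_congr rfl (fun k _ => step1 k), ← Finset.mul_sum]
  rw [Finset.sum_comm]
  have step2 : ∀ n ∈ Finset.range N,
      ∑ k ∈ Finset.range N, ∑ m ∈ Finset.range N,
        F n * (starRingEnd ℂ) (G m) * ww N ^ ((m : ℤ) * b - (n : ℤ) * a)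
          * ww N ^ ((k : ℤ) * ((n : ℤ) - (m : ℤ)))
      = F n * (starRingEnd ℂ) (G n) * ww N ^ ((n : ℤ) * (b - a)) * N := by
    intro n hn
    rw [Finset.sum_comm]
    have step3 : ∀ m ∈ Finset.range N,
        ∑ k ∈ Finset.range N,
          F n * (starRingEnd ℂ) (G m) * ww N ^ ((m : ℤ) * b - (n : ℤ) * a)
            * ww N ^ ((k : ℤ) * ((n : ℤ) - (m : ℤ)))
        = if m = n then F n * (starRingEnd ℂ) (G n) * ww N ^ ((n : ℤ) * (b - a)) * N else 0 := by
      intro m hm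
      rw [← Finset.mul_sum, geom_ww N hN ((n : ℤ) - (m : ℤ))]
      split_ifs with hdvd hmn hmn
      · subst hmn
        rw [show (m : ℤ) * b - (m : ℤ) * a = (m : ℤ) * (b - a) from by ring]
      · exfalso
        apply hmn
        obtain ⟨c, hc⟩ := hdvd
        have hn' : n < N := Finset.mem_range.mp hn
        have hm' : m < N := Finset.mem_range.mp hm
        have habs : ((n : ℤ) - (m : ℤ)) = 0 ∨ (N : ℤ) ≤ |(n : ℤ) - (m : ℤ)| := by
          rcases eq_or_ne ((n : ℤ) - (m : ℤ)) 0 with h | h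
          · exact Or.inl h
          · right
            apply Int.le_of_dvd (abs_pos.mpr h)
            exact (dvd_abs _ _).mpr ⟨c, hc⟩
        rcases habs with h | h
        · omega
        · have hlt : |(n : ℤ) - (m : ℤ)| < N := by
            rw [abs_sub_lt_iff]
            omega
          omega
      · exact absurd (hmn ▸ ⟨0, by ring⟩ : (N : ℤ) ∣ (n : ℤ) - (m : ℤ)) hdvd
      · rw [mul_zero]
    rw [Finset.sum_congr rfl step3, Finset.sum_ite_eq' (Finset.range N) n]
    rw [if_pos hn]
  rw [Finset.sum_congr rfl step2, ← Finset.sum_mul]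
  field_simp

end Parseval

noncomputable def wpF (N p rho : ℕ) (n : ℤ) : ℂ :=
  if rho = 0 then betaS N p n * betaS N p (2 * n)
  else if rho = 1 then betaS N p n * alphaS N p (2 * n)
  else if rho = 2 then alphaS N p n * alphaS N p (2 * n)
  else alphaS N p n * betaS N p (2 * n)

section Coset
open Complex Finset
open scoped ComplexOrder

lemma coset_sum {N p d : ℕ} (hNd : N = 4 * d) (hd : 0 < d) (hp : 2 ≤ p) (hpN : p ≤ N / 2)
    (hpos : ∀ n : ℤ, 0 < uSeq N p (2 * n) ^ 2 + vSeq N p (2 * n) ^ 2)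
    (rho sig : ℕ) (hrho : rho < 4) (hsig : sig < 4) (r : ℤ) :
    ∑ j ∈ Finset.range 4,
        wpF N p rho (r + (j : ℤ) * d) * (starRingEnd ℂ) (wpF N p sig (r + (j : ℤ) * d))
      = if rho = sig then 4 else 0 := by
  have hN : 0 < N := by omega
  have h2 : 2 ∣ N := by omega
  have hh : (N : ℤ) / 2 = 2 * (d : ℤ) := by omega
  have hcb : ∀ x : ℤ, (starRingEnd ℂ) (betaS N p x) = betaS N p x :=
    fun x => conj_betaS hN h2 hp x (hpos x)
  have hper : ∀ x y : ℤ, (N : ℤ) ∣ x - y → betaS N p x = betaS N p y :=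
    fun x y h => betaS_per hN h
  have hpil : ∀ x : ℤ, betaS N p x ^ 2 + betaS N p (x + 2 * (d : ℤ)) ^ 2 = 2 := by
    intro x
    have := pillar hNd hd hp hpN hpos x
    rwa [hh] at this
  rw [Finset.sum_range_succ, Finset.sum_range_succ, Finset.sum_range_succ,
    Finset.sum_range_succ, Finset.sum_range_zero]
  push_cast
  simp only [zero_add, zero_mul, add_zero, one_mul]
  have hV : ∀ x : ℤ, (starRingEnd ℂ) (ww N) ^ x = ww N ^ (-x) := by
    intro x
    rw [← map_zpow₀]
    exact conj_ww_zpow N x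
  have hWn : ∀ x y : ℤ, (N : ℤ) ∣ x - y - (N : ℤ) / 2 → ww N ^ x = -(ww N ^ y) :=
    fun x y h => ww_eq_neg_of_dvd hN h2 h
  have hWp : ∀ x y : ℤ, (N : ℤ) ∣ x - y → ww N ^ x = ww N ^ y :=
    fun x y h => ww_eq_of_dvd hN h
  have hB1 : betaS N p (2*(r + 2*(d:ℤ))) = betaS N p (2*r) := hper _ _ ⟨1, by omega⟩
  have hB2 : betaS N p (2*(r + 3*(d:ℤ))) = betaS N p (2*(r + (d:ℤ))) := hper _ _ ⟨1, by omega⟩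
  have hB3 : betaS N p (2*(r + (d:ℤ))) = betaS N p (2*r + 2*(d:ℤ)) := hper _ _ ⟨0, by omega⟩
  have hB4 : betaS N p (r + 3*(d:ℤ)) = betaS N p (r + (d:ℤ) + 2*(d:ℤ)) := hper _ _ ⟨0, by omega⟩
  have hB5 : betaS N p (r + 2*(d:ℤ) + 2*(d:ℤ)) = betaS N p r := hper _ _ ⟨1, by omega⟩
  have hB6 : betaS N p (r + 3*(d:ℤ) + 2*(d:ℤ)) = betaS N p (r + (d:ℤ)) := hper _ _ ⟨1, by omega⟩
  have hB7 : betaS N p (2*(r + (d:ℤ)) + 2*(d:ℤ)) = betaS N p (2*r) := hper _ _ ⟨1, by omega⟩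
  have hB8 : betaS N p (2*(r + 2*(d:ℤ)) + 2*(d:ℤ)) = betaS N p (2*r + 2*(d:ℤ)) := hper _ _ ⟨1, by omega⟩
  have hB9 : betaS N p (2*(r + 3*(d:ℤ)) + 2*(d:ℤ)) = betaS N p (2*r) := hper _ _ ⟨2, by omega⟩
  have hW1 : ww N ^ (r + 2*(d:ℤ)) = -(ww N ^ r) := hWn _ _ ⟨0, by omega⟩
  have hW2 : ww N ^ (r + 3*(d:ℤ)) = -(ww N ^ (r + (d:ℤ))) := hWn _ _ ⟨0, by omega⟩
  have hW3 : ww N ^ (2*(r + (d:ℤ))) = -(ww N ^ (2*r)) := hWn _ _ ⟨0, by omega⟩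
  have hW4 : ww N ^ (2*(r + 2*(d:ℤ))) = ww N ^ (2*r) := hWp _ _ ⟨1, by omega⟩
  have hW5 : ww N ^ (2*(r + 3*(d:ℤ))) = -(ww N ^ (2*r)) := hWn _ _ ⟨1, by omega⟩
  have hW6 : ww N ^ (-(r + 2*(d:ℤ))) = -(ww N ^ (-r)) := hWn _ _ ⟨-1, by omega⟩
  have hW7 : ww N ^ (-(r + 3*(d:ℤ))) = -(ww N ^ (-(r + (d:ℤ)))) := hWn _ _ ⟨-1, by omega⟩
  have hW8 : ww N ^ (-(2*(r + (d:ℤ)))) = -(ww N ^ (-(2*r))) := hWn _ _ ⟨-1, by omega⟩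
  have hW9 : ww N ^ (-(2*(r + 2*(d:ℤ)))) = ww N ^ (-(2*r)) := hWp _ _ ⟨-1, by omega⟩
  have hW10 : ww N ^ (-(2*(r + 3*(d:ℤ)))) = -(ww N ^ (-(2*r))) := hWn _ _ ⟨-2, by omega⟩
  have hI1 : ww N ^ r * ww N ^ (-r) = 1 := by
    rw [← ww_zpow_add, show r + -r = 0 from by ring, zpow_zero]
  have hI2 : ww N ^ (r + (d:ℤ)) * ww N ^ (-(r + (d:ℤ))) = 1 := by
    rw [← ww_zpow_add, show r + (d:ℤ) + -(r + (d:ℤ)) = 0 from by ring, zpow_zero]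
  have hI3 : ww N ^ (2*r) * ww N ^ (-(2*r)) = 1 := by
    rw [← ww_zpow_add, show 2*r + -(2*r) = 0 from by ring, zpow_zero]
  have hP1 : betaS N p r ^ 2 + betaS N p (r + 2*(d:ℤ)) ^ 2 = 2 := hpil r
  have hP2 : betaS N p (r + (d:ℤ)) ^ 2 + betaS N p (r + (d:ℤ) + 2*(d:ℤ)) ^ 2 = 2 := hpil (r + (d:ℤ))
  have hP3 : betaS N p (2*r) ^ 2 + betaS N p (2*r + 2*(d:ℤ)) ^ 2 = 2 := hpil (2*r)
  interval_cases rho <;> interval_cases sig <;>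
      norm_num [wpF, alphaS_eq, hh, map_mul, hcb, conj_ww_zpow] <;>
    simp only [hV, hB4, hB6, hB9, hB8, hB7, hB2, hB1, hB3, hB5, hW1, hW2, hW3, hW4, hW5,
      hW6, hW7, hW8, hW9, hW10]
  · linear_combination (betaS N p (2*r))^2 * hP1 + (betaS N p (2*r + 2*(d:ℤ)))^2 * hP2 + 2*hP3
  · linear_combination (ww N ^ (-(2*r)) * betaS N p (2*r) * betaS N p (2*r + 2*(d:ℤ))) * hP1
      - (ww N ^ (-(2*r)) * betaS N p (2*r) * betaS N p (2*r + 2*(d:ℤ))) * hP2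
  · ring
  · ring
  · linear_combination (ww N ^ (2*r) * betaS N p (2*r) * betaS N p (2*r + 2*(d:ℤ))) * hP1
      - (ww N ^ (2*r) * betaS N p (2*r) * betaS N p (2*r + 2*(d:ℤ))) * hP2
  · linear_combination (ww N ^ (2*r) * ww N ^ (-(2*r)) * (betaS N p (2*r + 2*(d:ℤ)))^2) * hP1
      + (ww N ^ (2*r) * ww N ^ (-(2*r)) * (betaS N p (2*r))^2) * hP2
      + (2 * ww N ^ (2*r) * ww N ^ (-(2*r))) * hP3 + 4 * hI3
  · ring
  · ring
  · ring
  · ring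
  · linear_combination
      (ww N ^ r * ww N ^ (-r) * ww N ^ (2*r) * ww N ^ (-(2*r)) * (betaS N p (2*r + 2*(d:ℤ)))^2) * hP1
      + (ww N ^ (r + (d:ℤ)) * ww N ^ (-(r + (d:ℤ))) * ww N ^ (2*r) * ww N ^ (-(2*r)) * (betaS N p (2*r))^2) * hP2
      + (2 * ww N ^ (2*r) * ww N ^ (-(2*r)) * (betaS N p (2*r + 2*(d:ℤ)))^2) * hI1
      + (2 * ww N ^ (2*r) * ww N ^ (-(2*r)) * (betaS N p (2*r))^2) * hI2
      + (2 * ww N ^ (2*r) * ww N ^ (-(2*r))) * hP3 + 4 * hI3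
  · linear_combination
      (ww N ^ r * ww N ^ (-r) * ww N ^ (2*r) * betaS N p (2*r) * betaS N p (2*r + 2*(d:ℤ))) * hP1
      - (ww N ^ (r + (d:ℤ)) * ww N ^ (-(r + (d:ℤ))) * ww N ^ (2*r) * betaS N p (2*r) * betaS N p (2*r + 2*(d:ℤ))) * hP2
      + (2 * ww N ^ (2*r) * betaS N p (2*r) * betaS N p (2*r + 2*(d:ℤ))) * hI1
      - (2 * ww N ^ (2*r) * betaS N p (2*r) * betaS N p (2*r + 2*(d:ℤ))) * hI2
  · ring
  · ring
  · linear_combination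
      (ww N ^ r * ww N ^ (-r) * ww N ^ (-(2*r)) * betaS N p (2*r) * betaS N p (2*r + 2*(d:ℤ))) * hP1
      - (ww N ^ (r + (d:ℤ)) * ww N ^ (-(r + (d:ℤ))) * ww N ^ (-(2*r)) * betaS N p (2*r) * betaS N p (2*r + 2*(d:ℤ))) * hP2
      + (2 * ww N ^ (-(2*r)) * betaS N p (2*r) * betaS N p (2*r + 2*(d:ℤ))) * hI1
      - (2 * ww N ^ (-(2*r)) * betaS N p (2*r) * betaS N p (2*r + 2*(d:ℤ))) * hI2
  · linear_combination (ww N ^ r * ww N ^ (-r) * (betaS N p (2*r))^2) * hP1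
      + (ww N ^ (r + (d:ℤ)) * ww N ^ (-(r + (d:ℤ))) * (betaS N p (2*r + 2*(d:ℤ)))^2) * hP2
      + (2 * (betaS N p (2*r))^2) * hI1 + (2 * (betaS N p (2*r + 2*(d:ℤ)))^2) * hI2 + 2 * hP3

lemma sum_range_four (f : ℕ → ℂ) (d : ℕ) :
    ∑ n ∈ Finset.range (4 * d), f n
      = ∑ t ∈ Finset.range d, (f t + f (t + d) + f (t + 2 * d) + f (t + 3 * d)) := by
  have hc : ∑ n ∈ Finset.range (4 * d), f n
      = ((∑ i ∈ Finset.Ico 0 d, f i + ∑ i ∈ Finset.Ico d (2 * d), f i)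
        + ∑ i ∈ Finset.Ico (2 * d) (3 * d), f i) + ∑ i ∈ Finset.Ico (3 * d) (4 * d), f i := by
    rw [Finset.sum_Ico_consecutive f (show 0 ≤ d by omega) (show d ≤ 2 * d by omega)]
    rw [Finset.sum_Ico_consecutive f (show 0 ≤ 2 * d by omega) (show 2 * d ≤ 3 * d by omega)]
    rw [Finset.sum_Ico_consecutive f (show 0 ≤ 3 * d by omega) (show 3 * d ≤ 4 * d by omega)]
    rw [Finset.range_eq_Ico]
  have e0 : ∑ i ∈ Finset.Ico 0 d, f i = ∑ i ∈ Finset.range d, f i := by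
    rw [Finset.range_eq_Ico]
  have e1 : ∑ i ∈ Finset.Ico d (2 * d), f i = ∑ i ∈ Finset.range d, f (i + d) := by
    rw [Finset.sum_Ico_eq_sum_range, show 2 * d - d = d from by omega]
    exact Finset.sum_congr rfl fun i _ => by rw [Nat.add_comm]
  have e2 : ∑ i ∈ Finset.Ico (2 * d) (3 * d), f i = ∑ i ∈ Finset.range d, f (i + 2 * d) := by
    rw [Finset.sum_Ico_eq_sum_range, show 3 * d - 2 * d = d from by omega]
    exact Finset.sum_congr rfl fun i _ => by rw [Nat.add_comm]
  have e3 : ∑ i ∈ Finset.Ico (3 * d) (4 * d), f i = ∑ i ∈ Finset.range d, f (i + 3 * d) := by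
    rw [Finset.sum_Ico_eq_sum_range, show 4 * d - 3 * d = d from by omega]
    exact Finset.sum_congr rfl fun i _ => by rw [Nat.add_comm]
  rw [hc, e0, e1, e2, e3, ← Finset.sum_add_distrib, ← Finset.sum_add_distrib,
    ← Finset.sum_add_distrib]

lemma geom_ww4 {N d : ℕ} (hNd : N = 4 * d) (hd : 0 < d) (s : ℤ) :
    ∑ t ∈ Finset.range d, ww N ^ ((t : ℤ) * (4 * s)) = if (d : ℤ) ∣ s then (d : ℂ) else 0 := by
  have hterm : ∀ t ∈ Finset.range d, ww N ^ ((t : ℤ) * (4 * s)) = ww d ^ ((t : ℤ) * s) := by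
    intro t _
    rw [ww_zpow, ww_zpow]
    congr 1
    have hdc : ((d : ℂ)) ≠ 0 := Nat.cast_ne_zero.mpr hd.ne'
    have hNc : ((N : ℂ)) = 4 * (d : ℂ) := by rw [hNd]; push_cast; ring
    rw [hNc]
    push_cast
    field_simp
  rw [Finset.sum_congr rfl hterm, geom_ww d hd s]

end Coset


/-- Each second-level wavelet packet has norm 1, its 4-sample shifts are
    mutually orthogonal, and wavelet packets with different indices are orthogonal. -/

theorem psi2_shifts_orthonormal (N p : ℕ) (hN : 0 < N) (hN4 : 4 ∣ N)
    (hp : 2 ≤ p) (hpN : p ≤ N / 2)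
    (hpos : ∀ n : ℤ, 0 < uSeq N p (2 * n) ^ 2 + vSeq N p (2 * n) ^ 2) :
    ∀ rho sig : ℕ, rho < 4 → sig < 4 → ∀ l m : ℕ, l < N / 4 → m < N / 4 →
      inner1 N (fun k => psi2 N p rho (k - 4 * (l : ℤ)))
          (fun k => psi2 N p sig (k - 4 * (m : ℤ)))
        = if rho = sig ∧ l = m then 1 else 0 := by
  obtain ⟨d, hNd⟩ := hN4
  have hd : 0 < d := by omega
  intro rho sig hrho hsig l m hl hm
  have hld : l < d := by omega
  have hmd : m < d := by omega
  have e1 : (fun k : ℤ => psi2 N p rho (k - 4 * (l : ℤ)))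
      = fun k : ℤ => (N : ℂ)⁻¹ * ∑ n ∈ Finset.range N,
          wpF N p rho n * ww N ^ ((k - 4 * (l : ℤ)) * (n : ℤ)) := rfl
  have e2 : (fun k : ℤ => psi2 N p sig (k - 4 * (m : ℤ)))
      = fun k : ℤ => (N : ℂ)⁻¹ * ∑ n ∈ Finset.range N,
          wpF N p sig n * ww N ^ ((k - 4 * (m : ℤ)) * (n : ℤ)) := rfl
  rw [e1, e2, inner1_eval hN (wpF N p rho) (wpF N p sig) (4 * (l : ℤ)) (4 * (m : ℤ))]
  have hrange : Finset.range N = Finset.range (4 * d) := by rw [hNd]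
  rw [hrange, sum_range_four (fun n : ℕ => wpF N p rho (n : ℤ) *
      (starRingEnd ℂ) (wpF N p sig (n : ℤ)) *
      ww N ^ ((n : ℤ) * (4 * (m : ℤ) - 4 * (l : ℤ)))) d]
  have hco := coset_sum hNd hd hp hpN hpos rho sig hrho hsig
  have hstep : ∀ t ∈ Finset.range d,
      (wpF N p rho ((t : ℕ) : ℤ) * (starRingEnd ℂ) (wpF N p sig ((t : ℕ) : ℤ)) *
          ww N ^ (((t : ℕ) : ℤ) * (4 * (m : ℤ) - 4 * (l : ℤ)))
        + wpF N p rho ((t + d : ℕ) : ℤ) * (starRingEnd ℂ) (wpF N p sig ((t + d : ℕ) : ℤ)) *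
          ww N ^ (((t + d : ℕ) : ℤ) * (4 * (m : ℤ) - 4 * (l : ℤ)))
        + wpF N p rho ((t + 2 * d : ℕ) : ℤ) * (starRingEnd ℂ) (wpF N p sig ((t + 2 * d : ℕ) : ℤ)) *
          ww N ^ (((t + 2 * d : ℕ) : ℤ) * (4 * (m : ℤ) - 4 * (l : ℤ)))
        + wpF N p rho ((t + 3 * d : ℕ) : ℤ) * (starRingEnd ℂ) (wpF N p sig ((t + 3 * d : ℕ) : ℤ)) *
          ww N ^ (((t + 3 * d : ℕ) : ℤ) * (4 * (m : ℤ) - 4 * (l : ℤ))))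
      = (if rho = sig then (4 : ℂ) else 0) * ww N ^ (((t : ℕ) : ℤ) * (4 * (m : ℤ) - 4 * (l : ℤ))) := by
    intro t _
    have hc := hco (t : ℤ)
    rw [Finset.sum_range_succ, Finset.sum_range_succ, Finset.sum_range_succ,
      Finset.sum_range_succ, Finset.sum_range_zero] at hc
    push_cast at hc
    rw [zero_add, zero_mul, add_zero, one_mul] at hc
    push_cast
    have p1 : ww N ^ (((t : ℤ) + (d : ℤ)) * (4 * (m : ℤ) - 4 * (l : ℤ)))
        = ww N ^ ((t : ℤ) * (4 * (m : ℤ) - 4 * (l : ℤ))) :=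
      ww_eq_of_dvd hN ⟨(m : ℤ) - (l : ℤ), by
        have hNZ : (N : ℤ) = 4 * (d : ℤ) := by omega
        rw [hNZ]; ring⟩
    have p2 : ww N ^ (((t : ℤ) + 2 * (d : ℤ)) * (4 * (m : ℤ) - 4 * (l : ℤ)))
        = ww N ^ ((t : ℤ) * (4 * (m : ℤ) - 4 * (l : ℤ))) :=
      ww_eq_of_dvd hN ⟨2 * ((m : ℤ) - (l : ℤ)), by
        have hNZ : (N : ℤ) = 4 * (d : ℤ) := by omega
        rw [hNZ]; ring⟩
    have p3 : ww N ^ (((t : ℤ) + 3 * (d : ℤ)) * (4 * (m : ℤ) - 4 * (l : ℤ)))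
        = ww N ^ ((t : ℤ) * (4 * (m : ℤ) - 4 * (l : ℤ))) :=
      ww_eq_of_dvd hN ⟨3 * ((m : ℤ) - (l : ℤ)), by
        have hNZ : (N : ℤ) = 4 * (d : ℤ) := by omega
        rw [hNZ]; ring⟩
    rw [p1, p2, p3]
    linear_combination (ww N ^ ((t : ℤ) * (4 * (m : ℤ) - 4 * (l : ℤ)))) * hc
  rw [Finset.sum_congr rfl hstep, ← Finset.mul_sum]
  have hgeo : ∑ t ∈ Finset.range d, ww N ^ (((t : ℕ) : ℤ) * (4 * (m : ℤ) - 4 * (l : ℤ)))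
      = if (d : ℤ) ∣ ((m : ℤ) - (l : ℤ)) then (d : ℂ) else 0 := by
    have : ∀ t ∈ Finset.range d, ww N ^ (((t : ℕ) : ℤ) * (4 * (m : ℤ) - 4 * (l : ℤ)))
        = ww N ^ (((t : ℕ) : ℤ) * (4 * ((m : ℤ) - (l : ℤ)))) := by
      intro t _
      rw [show ((t : ℕ) : ℤ) * (4 * (m : ℤ) - 4 * (l : ℤ))
        = ((t : ℕ) : ℤ) * (4 * ((m : ℤ) - (l : ℤ))) from by ring]
    rw [Finset.sum_congr rfl this, geom_ww4 hNd hd ((m : ℤ) - (l : ℤ))]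
  rw [hgeo]
  have hdvd : ((d : ℤ) ∣ ((m : ℤ) - (l : ℤ))) ↔ l = m := by
    constructor
    · intro hdv
      rcases eq_or_ne ((m : ℤ) - (l : ℤ)) 0 with h0 | h0
      · omega
      · exfalso
        have := Int.le_of_dvd (abs_pos.mpr h0) ((dvd_abs _ _).mpr hdv)
        have habs : |(m : ℤ) - (l : ℤ)| < d := by
          rw [abs_sub_lt_iff]
          omega
        omega
    · intro h
      rw [h]
      simp
  have hNc : ((N : ℂ)) = 4 * (d : ℂ) := by rw [hNd]; push_cast; ring
  have hdc : ((d : ℂ)) ≠ 0 := Nat.cast_ne_zero.mpr hd.ne'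
  rcases eq_or_ne rho sig with hrs | hrs
  · subst hrs
    rcases eq_or_ne l m with hlm | hlm
    · subst hlm
      rw [if_pos (hdvd.mpr rfl)]
      simp only [eq_self_iff_true, and_self, if_true]
      rw [hNc]
      field_simp
    · rw [if_neg (show ¬ (d : ℤ) ∣ ((m : ℤ) - (l : ℤ)) from fun hc => hlm (hdvd.mp hc))]
      simp [hlm]
  · simp [hrs]

end WP
end
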